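/- For all N ≥ 3, the largest cardinality of a Sidon system of 2-element subsets of {1,…,N} equals exactly 2N - 3. -/

import Mathlib

/-!
Write a 2-subset of `ℤ` as `{a, a + d}` with `d > 0`. The sumset of two such pairs determines
`a + b` and the multiset `{d, e}`, so `A + B = U + V` with `{A, B} ≠ {U, V}` means that some
nonzero translation `t` carries two different members of the family onto members of the family.
In a Sidon system every nonzero translation is therefore realised by at most one pair of members.

For the upper bound, group the members of a Sidon system in `[1, N]` by their difference
`d ∈ [1, N - 1]`. Besides the leftmost member of each group, every member is the translate of
its group's leftmost member by some `t ∈ [1, N - 2]`, and these translations are pairwise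
distinct; hence there are at most `(N - 1) + (N - 2)` members. The 2-subsets of `[1, N]`
containing `1` or `N` attain this bound.
-/

open Finset Pointwise

section Sidon

variable {G : Type*} [AddCommSemigroup G] [DecidableEq G]

def IsSidonSystem (𝒜 : Finset (Finset G)) : Prop :=
  ∀ A ∈ 𝒜, ∀ B ∈ 𝒜, ∀ U ∈ 𝒜, ∀ V ∈ 𝒜,
    A + B = U + V → ({A, B} : Finset (Finset G)) = {U, V}

theorem IsSidonSystem.eq_or_eq_of_vadd {𝒜 : Finset (Finset G)} (h𝒜 : IsSidonSystem 𝒜)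
    {A B : Finset G} {t : G} (hA : A ∈ 𝒜) (hB : B ∈ 𝒜) (htA : t +ᵥ A ∈ 𝒜)
    (htB : t +ᵥ B ∈ 𝒜) : t +ᵥ A = A ∨ t +ᵥ A = t +ᵥ B := by
  have hsum : (t +ᵥ A) + B = A + (t +ᵥ B) := by
    simp only [← singleton_add]; ac_rfl
  have hmem : t +ᵥ A ∈ ({A, t +ᵥ B} : Finset (Finset G)) :=
    h𝒜 _ htA _ hB _ hA _ htB hsum ▸ mem_insert_self _ _
  simpa only [mem_insert, mem_singleton] using hmem

end Sidon

theorem vadd_pair (t a b : ℤ) : t +ᵥ ({a, b} : Finset ℤ) = {t + a, t + b} := by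
  rw [vadd_finset_insert, vadd_finset_singleton, vadd_eq_add, vadd_eq_add]

theorem exists_eq_pair_of_subset_Icc {A : Finset ℤ} {N : ℤ} (hsub : A ⊆ Icc 1 N)
    (hcard : A.card = 2) : ∃ a d : ℤ, 1 ≤ a ∧ 0 < d ∧ a + d ≤ N ∧ A = {a, a + d} := by
  obtain ⟨x, y, hxy, rfl⟩ := card_eq_two.mp hcard
  have hx := mem_Icc.mp (hsub (mem_insert_self x {y}))
  have hy := mem_Icc.mp (hsub (mem_insert_of_mem (mem_singleton_self y)))
  rcases hxy.lt_or_gt with h | h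
  · exact ⟨x, y - x, by omega, by omega, by omega, by rw [add_sub_cancel]⟩
  · exact ⟨y, x - y, by omega, by omega, by omega, by rw [add_sub_cancel, pair_comm]⟩

theorem pair_subset_Icc {a d N : ℤ} (ha : 1 ≤ a) (hd : 0 < d) (hN : a + d ≤ N) :
    ({a, a + d} : Finset ℤ) ⊆ Icc 1 N ∧ ({a, a + d} : Finset ℤ).card = 2 := by
  refine ⟨fun x hx => ?_, card_pair (by omega)⟩
  rw [mem_insert, mem_singleton] at hx
  rw [mem_Icc]
  omega

theorem pair_add_pair (x y z w : ℤ) :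
    ({x, y} : Finset ℤ) + {z, w} = {x + z, x + w, y + z, y + w} := by
  ext s
  simp only [mem_add, mem_insert, mem_singleton]
  constructor
  · rintro ⟨p, (rfl | rfl), q, (rfl | rfl), rfl⟩ <;> simp
  · rintro (rfl | rfl | rfl | rfl) <;> exact ⟨_, by simp, _, by simp, rfl⟩

/-- The two smallest and the largest element of the sumset are `a + b`, `a + b + min d e` and
`a + b + d + e`. -/
theorem pair_add_pair_eq {a b u v d e f g : ℤ} (hd : 0 < d) (he : 0 < e) (hf : 0 < f)
    (hg : 0 < g) (h : ({a, a + d} : Finset ℤ) + {b, b + e} = {u, u + f} + {v, v + g}) :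
    a + b = u + v ∧ (d = f ∧ e = g ∨ d = g ∧ e = f) := by
  rw [pair_add_pair, pair_add_pair, Finset.ext_iff] at h
  simp only [mem_insert, mem_singleton] at h
  have := (h (a + b)).1 (by simp); have := (h (a + (b + e))).1 (by simp)
  have := (h (a + d + b)).1 (by simp); have := (h (a + d + (b + e))).1 (by simp)
  have := (h (u + v)).2 (by simp); have := (h (u + (v + g))).2 (by simp)
  have := (h (u + f + v)).2 (by simp); have := (h (u + f + (v + g))).2 (by simp)
  omega

/-- `A` stands for the pair `{lo A, lo A + dif A}`. -/
theorem card_le_of_translations_unique {ι : Type*} (S : Finset ι) (lo dif : ι → ℤ) (N : ℕ)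
    (hbound : ∀ A ∈ S, 1 ≤ lo A ∧ 0 < dif A ∧ lo A + dif A ≤ N)
    (hinj : ∀ A ∈ S, ∀ B ∈ S, lo A = lo B → dif A = dif B → A = B)
    (htrans : ∀ A ∈ S, ∀ A' ∈ S, ∀ B ∈ S, ∀ B' ∈ S, dif A' = dif A → dif B' = dif B →
      lo A' - lo A = lo B' - lo B → lo A' ≠ lo A → A' = B') :
    S.card ≤ 2 * N - 3 := by
  have hleftmost : ∀ d, ∃ m : ℤ,
      ∀ A ∈ S, dif A = d → m ≤ lo A ∧ ∃ A₀ ∈ S, dif A₀ = d ∧ lo A₀ = m := by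
    intro d
    by_cases hd : (S.filter (dif · = d)).Nonempty
    · obtain ⟨A₀, hA₀, hmin⟩ := exists_min_image _ lo hd
      rw [mem_filter] at hA₀
      exact ⟨lo A₀, fun A hA hAd => ⟨hmin A (mem_filter.mpr ⟨hA, hAd⟩), A₀, hA₀.1, hA₀.2, rfl⟩⟩
    · exact ⟨0, fun A hA hAd => absurd ⟨A, mem_filter.mpr ⟨hA, hAd⟩⟩ hd⟩
  choose m hm using hleftmost
  let code : ι → ℤ ⊕ ℤ := fun A =>
    if lo A = m (dif A) then .inl (dif A) else .inr (lo A - m (dif A))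
  have hmaps : Set.MapsTo code S ((Icc 1 ((N : ℤ) - 1)).disjSum (Icc 1 ((N : ℤ) - 2))) := by
    intro A hA
    obtain ⟨h1, h2, h3⟩ := hbound A hA
    obtain ⟨hle, A₀, hA₀, -, hA₀m⟩ := hm (dif A) A hA rfl
    have := (hbound A₀ hA₀).1
    simp only [code]
    split_ifs with h
    · rw [mem_coe, inl_mem_disjSum, mem_Icc]; omega
    · rw [mem_coe, inr_mem_disjSum, mem_Icc]; omega
  have hcode_inj : Set.InjOn code S := by
    intro A hA B hB hAB
    obtain ⟨-, A₀, hA₀, hA₀d, hA₀m⟩ := hm (dif A) A hA rfl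
    obtain ⟨-, B₀, hB₀, hB₀d, hB₀m⟩ := hm (dif B) B hB rfl
    simp only [code] at hAB
    split_ifs at hAB with hA_first hB_first hB_first <;>
      simp only [Sum.inl.injEq, Sum.inr.injEq] at hAB
    · exact hinj A hA B hB (by rw [hA_first, hB_first, hAB]) hAB
    · exact htrans A₀ hA₀ A hA B₀ hB₀ B hB hA₀d.symm hB₀d.symm (by omega) (by omega)
  have := card_le_card_of_injOn code hmaps hcode_inj
  rw [card_disjSum, Int.card_Icc, Int.card_Icc] at this
  omega

theorem IsSidonSystem.card_le {𝒜 : Finset (Finset ℤ)} {N : ℕ} (h𝒜 : IsSidonSystem 𝒜)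
    (hpairs : ∀ A ∈ 𝒜, A ⊆ Icc 1 (N : ℤ) ∧ A.card = 2) : 𝒜.card ≤ 2 * N - 3 := by
  have hcoord (A) (hA : A ∈ 𝒜) :=
    exists_eq_pair_of_subset_Icc (hpairs A hA).1 (hpairs A hA).2
  choose! lo dif hlo hdif hle hA using hcoord
  have htranslate : ∀ C ∈ 𝒜, ∀ C' ∈ 𝒜, dif C' = dif C → C' = (lo C' - lo C) +ᵥ C := by
    intro C hC C' hC' hCC'
    calc C' = {lo C', lo C' + dif C'} := hA C' hC'
      _ = (lo C' - lo C) +ᵥ {lo C, lo C + dif C} := by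
        rw [vadd_pair, hCC']
        congr 2 <;> ring
      _ = (lo C' - lo C) +ᵥ C := by rw [← hA C hC]
  refine card_le_of_translations_unique 𝒜 lo dif N (fun A h => ⟨hlo A h, hdif A h, hle A h⟩)
    (fun A hA' B hB' h1 h2 => by rw [hA A hA', hA B hB', h1, h2]) ?_
  intro A hA A' hA' B hB B' hB' hdA hdB ht hne
  have hA't : A' = (lo B' - lo B) +ᵥ A := ht ▸ htranslate A hA A' hA' hdA
  have hB't := htranslate B hB B' hB' hdB
  rcases h𝒜.eq_or_eq_of_vadd hA hB (hA't ▸ hA') (hB't ▸ hB') with h | h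
  · exact absurd (congrArg lo (hA't.trans h)) hne
  · exact hA't.trans (h.trans hB't.symm)

noncomputable def endpointPairs (N : ℕ) : Finset (Finset ℤ) :=
  (Icc 2 (N : ℤ)).image (fun k => {1, k}) ∪ (Icc 2 ((N : ℤ) - 1)).image (fun k => {k, (N : ℤ)})

theorem exists_eq_pair_of_mem_endpointPairs {N : ℕ} {A : Finset ℤ} (hA : A ∈ endpointPairs N) :
    ∃ a d : ℤ, 1 ≤ a ∧ 0 < d ∧ a + d ≤ N ∧ (a = 1 ∨ a + d = N) ∧ A = {a, a + d} := by
  simp only [endpointPairs, mem_union, mem_image, mem_Icc] at hA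
  rcases hA with ⟨k, hk, rfl⟩ | ⟨k, hk, rfl⟩
  · exact ⟨1, k - 1, by omega, by omega, by omega, by omega, by rw [add_sub_cancel]⟩
  · exact ⟨k, N - k, by omega, by omega, by omega, by omega, by rw [add_sub_cancel]⟩

theorem isSidonSystem_endpointPairs (N : ℕ) : IsSidonSystem (endpointPairs N) := by
  intro A hA B hB U hU V hV hsum
  obtain ⟨a, d, ha, hd, hda, haN, rfl⟩ := exists_eq_pair_of_mem_endpointPairs hA
  obtain ⟨b, e, hb, he, heb, hbN, rfl⟩ := exists_eq_pair_of_mem_endpointPairs hB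
  obtain ⟨u, f, hu, hf, hfu, huN, rfl⟩ := exists_eq_pair_of_mem_endpointPairs hU
  obtain ⟨v, g, hv, hg, hgv, hvN, rfl⟩ := exists_eq_pair_of_mem_endpointPairs hV
  obtain ⟨hs, hdiff⟩ := pair_add_pair_eq hd he hf hg hsum
  have : (a = u ∧ d = f ∧ b = v ∧ e = g) ∨ (a = v ∧ d = g ∧ b = u ∧ e = f) := by omega
  rcases this with ⟨rfl, rfl, rfl, rfl⟩ | ⟨rfl, rfl, rfl, rfl⟩
  · rfl
  · exact pair_comm _ _

theorem card_endpointPairs (N : ℕ) : (endpointPairs N).card = 2 * N - 3 := by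
  have hleft : ((Icc 2 (N : ℤ)).image (fun k => ({1, k} : Finset ℤ))).card = N - 1 := by
    rw [card_image_of_injOn, Int.card_Icc]
    · omega
    · intro k hk k' hk' h
      simp only [coe_Icc, Set.mem_Icc] at hk hk' h
      have : k ∈ ({1, k'} : Finset ℤ) := h ▸ mem_insert_of_mem (mem_singleton_self k)
      rw [mem_insert, mem_singleton] at this
      omega
  have hright : ((Icc 2 ((N : ℤ) - 1)).image
      (fun k => ({k, (N : ℤ)} : Finset ℤ))).card = N - 2 := by
    rw [card_image_of_injOn, Int.card_Icc]
    · omega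
    · intro k hk k' hk' h
      simp only [coe_Icc, Set.mem_Icc] at hk hk' h
      have : k ∈ ({k', (N : ℤ)} : Finset ℤ) := h ▸ mem_insert_self k _
      rw [mem_insert, mem_singleton] at this
      omega
  have hdisj : Disjoint ((Icc 2 (N : ℤ)).image (fun k => ({1, k} : Finset ℤ)))
      ((Icc 2 ((N : ℤ) - 1)).image (fun k => ({k, (N : ℤ)} : Finset ℤ))) := by
    rw [disjoint_left]
    rintro _ hA hA'
    simp only [mem_image, mem_Icc] at hA hA'
    obtain ⟨k, hk, rfl⟩ := hA
    obtain ⟨k', hk', h⟩ := hA'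
    have : (1 : ℤ) ∈ ({k', (N : ℤ)} : Finset ℤ) := h ▸ mem_insert_self 1 _
    rw [mem_insert, mem_singleton] at this
    omega
  rw [endpointPairs, card_union_of_disjoint hdisj, hleft, hright]
  omega

theorem F2_eq_general (N : ℕ) :
    IsGreatest {n : ℕ | ∃ 𝒜 : Finset (Finset ℤ),
      (∀ A ∈ 𝒜, A ⊆ Finset.Icc (1 : ℤ) N ∧ A.card = 2) ∧
      (∀ A ∈ 𝒜, ∀ B ∈ 𝒜, ∀ U ∈ 𝒜, ∀ V ∈ 𝒜,
        A + B = U + V → ({A, B} : Finset (Finset ℤ)) = {U, V}) ∧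
      𝒜.card = n} (2 * N - 3) := by
  refine ⟨⟨endpointPairs N, fun A hA => ?_, isSidonSystem_endpointPairs N,
    card_endpointPairs N⟩, ?_⟩
  · obtain ⟨a, d, ha, hd, hda, -, rfl⟩ := exists_eq_pair_of_mem_endpointPairs hA
    exact pair_subset_Icc ha hd hda
  · rintro n ⟨𝒜, hpairs, hSidon, rfl⟩
    exact IsSidonSystem.card_le hSidon hpairs

theorem F2_eq (N : ℕ) (hN : 3 ≤ N) :
    IsGreatest {n : ℕ | ∃ 𝒜 : Finset (Finset ℤ),
      (∀ A ∈ 𝒜, A ⊆ Finset.Icc (1 : ℤ) N ∧ A.card = 2) ∧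
      (∀ A ∈ 𝒜, ∀ B ∈ 𝒜, ∀ U ∈ 𝒜, ∀ V ∈ 𝒜,
        A + B = U + V → ({A, B} : Finset (Finset ℤ)) = {U, V}) ∧
      𝒜.card = n} (2 * N - 3) :=
  F2_eq_general N
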